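/- arXiv:2209.09190 — 2 statements merged into one kernel-verified Lean document; each statement's English description precedes it below -/
import Mathlib

section
/- Fix n ≥ 1, c > 0, and i ∈ {1,…,n}. Let g₁,…,gₙ : ℝ → [0,∞) be bounded measurable functions with ∫_ℝ gⱼ(t) φ_c(t) dt > 0 for every j, where φ_c(t) = (2πc)^{-1/2} exp(−t²/(2c)). Let (A_p)_{p≥1} be symmetric positive definite n×n real matrices with A_p → c I_n entrywise. For a symmetric positive definite n×n matrix A, let φ_A(η) = (2π)^{-n/2}(det A)^{-1/2} exp(−½ ηᵀA^{-1}η); integrals are with respect to Lebesgue measure. Then, as p → ∞, [∫_{ℝⁿ} gᵢ(ηᵢ) ∏_{j=1}^n gⱼ(ηⱼ) φ_{A_p}(η) dη] / [∫_{ℝⁿ} ∏_{j=1}^n gⱼ(ηⱼ) φ_{A_p}(η) dη] → [∫_ℝ gᵢ(t)² φ_c(t) dt] / [∫_ℝ gᵢ(t) φ_c(t) dt], the denominators being strictly positive for all large p. -/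
open MeasureTheory Matrix Filter Topology

/-- The centered Gaussian density on `ℝᵐ` with covariance matrix `A`. -/
noncomputable def gaussDensity {m : ℕ} (A : Matrix (Fin m) (Fin m) ℝ)
    (η : Fin m → ℝ) : ℝ :=
  (Real.sqrt ((2 * Real.pi) ^ m * A.det))⁻¹ * Real.exp (-(η ⬝ᵥ A⁻¹.mulVec η) / 2)

/-- The centered univariate Gaussian density with variance `c`. -/
noncomputable def gauss1 (c t : ℝ) : ℝ :=
  (Real.sqrt (2 * Real.pi * c))⁻¹ * Real.exp (-(t ^ 2) / (2 * c))

/-!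
Numerator and denominator are both of the form `∫ ∏ⱼ hⱼ(ηⱼ) φ_{Aₚ}(η) dη` with bounded measurable
`hⱼ` (for the numerator `hᵢ = gᵢ²`), and such integrals converge to `∏ⱼ ∫ hⱼ φ_c`, since
`φ_{cI}(η) = ∏ⱼ φ_c(ηⱼ)`; in the ratio of the limits all factors `j ≠ i` cancel. The convergence is
dominated convergence: `φ_{Aₚ} → φ_{cI}` pointwise, and as soon as `det Aₚ ≥ det (cI) / 2` and
`Aₚ⁻¹ ≥ (2c)⁻¹ I` as quadratic forms, `φ_{Aₚ}(η)` is bounded by a fixed multiple of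
`exp (-|η|² / (4c))`.
-/

namespace Matrix

variable {ι K : Type*} [Fintype ι]

lemma inv_smul_one [DecidableEq ι] [Field K] {c : K} (hc : c ≠ 0) :
    (c • (1 : Matrix ι ι K))⁻¹ = c⁻¹ • 1 :=
  inv_eq_right_inv <| by rw [smul_mul_smul_comm, mul_inv_cancel₀ hc, one_mul, one_smul]

lemma dotProduct_smul_one_mulVec [DecidableEq ι] [CommSemiring K] (c : K) (η : ι → K) :
    η ⬝ᵥ (c • (1 : Matrix ι ι K)) *ᵥ η = c * ∑ j, η j ^ 2 := by
  simp [smul_mulVec, dotProduct, sq, Finset.mul_sum, mul_left_comm]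

lemma abs_dotProduct_mulVec_le {M : Matrix ι ι ℝ} {ε : ℝ} (hε : 0 ≤ ε) (hM : ∀ a b, |M a b| ≤ ε)
    (η : ι → ℝ) : |η ⬝ᵥ M *ᵥ η| ≤ ε * Fintype.card ι * ∑ j, η j ^ 2 :=
  calc |η ⬝ᵥ M *ᵥ η| = |∑ a, ∑ b, η a * M a b * η b| := by
        simp only [dotProduct, mulVec, Finset.mul_sum, mul_assoc]
    _ ≤ ∑ a, ∑ b, |η a| * ε * |η b| := by
        refine (Finset.abs_sum_le_sum_abs _ _).trans (Finset.sum_le_sum fun a _ => ?_)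
        refine (Finset.abs_sum_le_sum_abs _ _).trans (Finset.sum_le_sum fun b _ => ?_)
        rw [abs_mul, abs_mul]
        gcongr
        exact hM a b
    _ = ε * (∑ j, |η j|) ^ 2 := by
        rw [sq, Finset.sum_mul_sum, Finset.mul_sum]
        simp only [Finset.mul_sum]
        exact Finset.sum_congr rfl fun _ _ => Finset.sum_congr rfl fun _ _ => by ring
    _ ≤ ε * Fintype.card ι * ∑ j, η j ^ 2 := by
        rw [mul_assoc]
        gcongr
        simpa using sq_sum_le_card_mul_sum_sq (s := Finset.univ) (f := fun j => |η j|)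

lemma eventually_mul_sum_sq_le_dotProduct_mulVec [DecidableEq ι] {α : Type*} {l : Filter α}
    {M : α → Matrix ι ι ℝ} {r s : ℝ} (hM : Tendsto M l (𝓝 (r • 1))) (hs : s < r) :
    ∀ᶠ x in l, ∀ η : ι → ℝ, s * ∑ j, η j ^ 2 ≤ η ⬝ᵥ M x *ᵥ η := by
  set ε := (r - s) / (Fintype.card ι + 1)
  have hε : 0 < ε := by positivity
  have hεcard : ε * Fintype.card ι ≤ r - s := by
    rw [div_mul_eq_mul_div, div_le_iff₀ (by positivity)]
    nlinarith
  have hentries : ∀ᶠ x in l, ∀ a b, |(M x - r • 1) a b| ≤ ε := by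
    simp only [eventually_all]
    intro a b
    have := (hM.apply_nhds a).apply_nhds b
    filter_upwards [Metric.tendsto_nhds.1 this ε hε] with x hx
    exact hx.le
  filter_upwards [hentries] with x hx η
  have hE := abs_le.1 (abs_dotProduct_mulVec_le hε.le hx η)
  have hsplit : η ⬝ᵥ M x *ᵥ η = r * ∑ j, η j ^ 2 + η ⬝ᵥ (M x - r • 1) *ᵥ η := by
    rw [sub_mulVec, dotProduct_sub, dotProduct_smul_one_mulVec]; ring
  have hS : 0 ≤ ∑ j, η j ^ 2 := by positivity
  rw [hsplit]
  nlinarith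

end Matrix

section gaussDensity

open Real

variable {m : ℕ}

lemma gaussDensity_nonneg (A : Matrix (Fin m) (Fin m) ℝ) (η : Fin m → ℝ) :
    0 ≤ gaussDensity A η := by
  unfold gaussDensity; positivity

lemma continuous_gaussDensity (A : Matrix (Fin m) (Fin m) ℝ) : Continuous (gaussDensity A) := by
  unfold gaussDensity; fun_prop

lemma continuousAt_gaussDensity {A : Matrix (Fin m) (Fin m) ℝ} (hA : 0 < A.det) (η : Fin m → ℝ) :
    ContinuousAt (fun B => gaussDensity B η) A := by
  have hinv : ContinuousAt Inv.inv A :=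
    continuousAt_matrix_inv A (by
      rw [Ring.inverse_eq_inv']; exact continuousAt_inv₀ hA.ne')
  have hsqrt : √((2 * π) ^ m * A.det) ≠ 0 := (sqrt_pos.2 (by positivity)).ne'
  unfold gaussDensity
  refine ContinuousAt.mul ?_ ?_
  · exact (Continuous.continuousAt (by fun_prop)).inv₀ hsqrt
  · have hquad : Continuous fun M : Matrix (Fin m) (Fin m) ℝ => η ⬝ᵥ M *ᵥ η :=
      continuous_const.dotProduct (continuous_id.matrix_mulVec continuous_const)
    exact continuous_exp.continuousAt.comp ((hquad.continuousAt.comp hinv).neg.div_const 2)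

lemma gaussDensity_smul_one {c : ℝ} (hc : 0 < c) (η : Fin m → ℝ) :
    gaussDensity (c • (1 : Matrix (Fin m) (Fin m) ℝ)) η = ∏ j, gauss1 c (η j) := by
  have hsqrt : √((2 * π) ^ m * c ^ m) = √(2 * π * c) ^ m := by
    rw [← mul_pow, sqrt_eq_iff_eq_sq (by positivity) (by positivity), ← pow_mul, mul_comm m 2,
      pow_mul, sq_sqrt (by positivity)]
  simp only [gaussDensity, gauss1, inv_smul_one hc.ne', dotProduct_smul_one_mulVec, det_smul,
    det_one, mul_one, Fintype.card_fin, hsqrt, Finset.prod_mul_distrib, Finset.prod_const,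
    Finset.card_univ, inv_pow, ← exp_sum]
  congr 2
  rw [Finset.mul_sum, neg_div, Finset.sum_div, ← Finset.sum_neg_distrib]
  exact Finset.sum_congr rfl fun j _ => by field_simp

lemma gaussDensity_le {A : Matrix (Fin m) (Fin m) ℝ} {d s : ℝ} (hd : 0 < d) (hdA : d ≤ A.det)
    {η : Fin m → ℝ} (hη : s * ∑ j, η j ^ 2 ≤ η ⬝ᵥ A⁻¹ *ᵥ η) :
    gaussDensity A η ≤ (√((2 * π) ^ m * d))⁻¹ * ∏ j, exp (-(s / 2) * η j ^ 2) := by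
  unfold gaussDensity
  rw [← exp_sum, ← Finset.mul_sum]
  gcongr
  linarith

end gaussDensity

open Real in
theorem tendsto_integral_prod_mul_gaussDensity {α : Type*} {l : Filter α} [l.IsCountablyGenerated]
    {n : ℕ} {c : ℝ} (hc : 0 < c) {h : Fin n → ℝ → ℝ} (hm : ∀ j, Measurable (h j))
    (hb : ∀ j, ∃ C, ∀ t, |h j t| ≤ C) {A : α → Matrix (Fin n) (Fin n) ℝ}
    (hA : Tendsto A l (𝓝 (c • 1))) :
    Tendsto (fun p => ∫ η : Fin n → ℝ, (∏ j, h j (η j)) * gaussDensity (A p) η) l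
      (𝓝 (∏ j, ∫ t, h j t * gauss1 c t)) := by
  choose C hC using hb
  have hdet_lim : 0 < (c • (1 : Matrix (Fin n) (Fin n) ℝ)).det := by
    rw [det_smul, det_one, mul_one]; positivity
  have hdet : ∀ᶠ p in l, (c • (1 : Matrix (Fin n) (Fin n) ℝ)).det / 2 ≤ (A p).det :=
    ((continuous_id.matrix_det.tendsto _).comp hA).eventually
      (eventually_ge_nhds (half_lt_self hdet_lim))
  have hAinv : Tendsto (fun p => (A p)⁻¹) l (𝓝 (c⁻¹ • 1)) := by
    rw [← inv_smul_one hc.ne']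
    exact (continuousAt_matrix_inv _ (by
      rw [Ring.inverse_eq_inv']; exact continuousAt_inv₀ hdet_lim.ne')).tendsto.comp hA
  have hquad := eventually_mul_sum_sq_le_dotProduct_mulVec hAinv (half_lt_self (inv_pos.2 hc))
  have hlimit : ∫ η : Fin n → ℝ, (∏ j, h j (η j)) * gaussDensity (c • 1) η =
      ∏ j, ∫ t, h j t * gauss1 c t := by
    simp_rw [gaussDensity_smul_one hc, ← Finset.prod_mul_distrib]
    exact integral_fintype_prod_eq_prod (fun j t => h j t * gauss1 c t)
  rw [← hlimit]
  refine tendsto_integral_filter_of_dominated_convergence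
    (fun η => (∏ j, C j) * ((√((2 * π) ^ n * ((c • 1 : Matrix (Fin n) (Fin n) ℝ).det / 2)))⁻¹ *
      ∏ j, exp (-(c⁻¹ / 2 / 2) * η j ^ 2)))
    (Eventually.of_forall fun p => ?_) ?_ ?_
    (ae_of_all _ fun η => ((continuousAt_gaussDensity hdet_lim η).tendsto.comp hA).const_mul _)
  · exact ((Finset.measurable_prod _ fun j _ => (hm j).comp (measurable_pi_apply j)).mul
      (continuous_gaussDensity _).measurable).aestronglyMeasurable
  · filter_upwards [hdet, hquad] with p hdet_p hquad_p
    refine ae_of_all _ fun η => ?_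
    rw [norm_mul, norm_of_nonneg (gaussDensity_nonneg _ _), norm_eq_abs, Finset.abs_prod]
    exact mul_le_mul (Finset.prod_le_prod (fun j _ => abs_nonneg _) fun j _ => hC j _)
      (gaussDensity_le (half_pos hdet_lim) hdet_p (hquad_p η)) (gaussDensity_nonneg _ _)
      (Finset.prod_nonneg fun j _ => (abs_nonneg _).trans (hC j 0))
  · exact (Integrable.fintype_prod fun j => integrable_exp_neg_mul_sq (by positivity)).const_mul _
      |>.const_mul _

lemma Fintype.prod_update_mul {ι M : Type*} [Fintype ι] [DecidableEq ι] [CommMonoid M]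
    (f : ι → M) (i : ι) (b : M) : (∏ j, Function.update f i b j) * f i = b * ∏ j, f j := by
  rw [Finset.prod_update_of_mem (Finset.mem_univ i),
    Finset.prod_eq_mul_prod_sdiff_singleton_of_mem (Finset.mem_univ i) f, mul_right_comm,
    mul_assoc]

theorem posterior_predictive_moment_limit_general
    (n : ℕ) (c : ℝ) (hc : 0 < c) (i : Fin n)
    (g : Fin n → ℝ → ℝ)
    (hgm : ∀ j, Measurable (g j)) (hg0 : ∀ j t, 0 ≤ g j t)
    (hgb : ∀ j, ∃ B, ∀ t, g j t ≤ B)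
    (hgpos : ∀ j, 0 < ∫ t : ℝ, g j t * gauss1 c t)
    (A : ℕ → Matrix (Fin n) (Fin n) ℝ)
    (hAc : ∀ a b, Tendsto (fun p => A p a b) atTop
      (𝓝 ((c • (1 : Matrix (Fin n) (Fin n) ℝ)) a b))) :
    Tendsto (fun p =>
        (∫ η : Fin n → ℝ, g i (η i) * (∏ j, g j (η j)) * gaussDensity (A p) η) /
        (∫ η : Fin n → ℝ, (∏ j, g j (η j)) * gaussDensity (A p) η))
      atTop (𝓝 ((∫ t : ℝ, (g i t) ^ 2 * gauss1 c t) / (∫ t : ℝ, g i t * gauss1 c t))) ∧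
    (∀ᶠ p in atTop,
      0 < ∫ η : Fin n → ℝ, (∏ j, g j (η j)) * gaussDensity (A p) η) := by
  have hA : Tendsto A atTop (𝓝 (c • 1)) := tendsto_pi_nhds.2 fun a => tendsto_pi_nhds.2 (hAc a)
  have hg_abs (j) : ∃ B, ∀ t, |g j t| ≤ B :=
    (hgb j).imp fun B hB t => (abs_of_nonneg (hg0 j t)).trans_le (hB t)
  have hden_pos : 0 < ∏ j, ∫ t, g j t * gauss1 c t := Finset.prod_pos fun j _ => hgpos j
  set f := Function.update g i fun t => g i t ^ 2
  have hfm : ∀ j, Measurable (f j) :=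
    (Function.forall_update_iff g fun _ h => Measurable h).2 ⟨(hgm i).pow_const 2, fun j _ => hgm j⟩
  have hfb : ∀ j, ∃ B, ∀ t, |f j t| ≤ B := by
    refine (Function.forall_update_iff g fun _ h => ∃ B, ∀ t, |h t| ≤ B).2 ⟨?_, fun j _ => hg_abs j⟩
    obtain ⟨B, hB⟩ := hg_abs i
    exact ⟨B ^ 2, fun t => by rw [abs_pow]; exact pow_le_pow_left₀ (abs_nonneg _) (hB t) 2⟩
  have hprod (η : Fin n → ℝ) : ∏ j, f j (η j) = g i (η i) * ∏ j, g j (η j) := by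
    simp only [f, Function.apply_update (fun j (h : ℝ → ℝ) => h (η j))]
    rw [Finset.prod_update_of_mem (Finset.mem_univ i), sq, mul_assoc,
      ← Finset.prod_eq_mul_prod_sdiff_singleton_of_mem (Finset.mem_univ i) fun k => g k (η k)]
  have hlim : (∏ j, ∫ t, f j t * gauss1 c t) / ∏ j, ∫ t, g j t * gauss1 c t =
      (∫ t, g i t ^ 2 * gauss1 c t) / ∫ t, g i t * gauss1 c t := by
    simp only [f, Function.apply_update (fun j (h : ℝ → ℝ) => ∫ t, h t * gauss1 c t)]
    rw [div_eq_div_iff hden_pos.ne' (hgpos i).ne']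
    exact Fintype.prod_update_mul _ i _
  have hden := tendsto_integral_prod_mul_gaussDensity hc hgm hg_abs hA
  have hnum := tendsto_integral_prod_mul_gaussDensity hc hfm hfb hA
  refine ⟨?_, hden.eventually (eventually_gt_nhds hden_pos)⟩
  simp only [← hprod]
  exact hlim ▸ hnum.div hden hden_pos.ne'

/-- **Posterior predictive moment convergence (Theorem 4(a)).** If `Aₚ → cIₙ`
entrywise, then the ratio `∫ gᵢ ∏ⱼgⱼ dN(0,Aₚ) / ∫ ∏ⱼgⱼ dN(0,Aₚ)` converges to
`∫ gᵢ² φ_c / ∫ gᵢ φ_c`, the denominators being eventually strictly positive. -/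
theorem posterior_predictive_moment_limit
    (n : ℕ) (hn : 1 ≤ n) (c : ℝ) (hc : 0 < c) (i : Fin n)
    (g : Fin n → ℝ → ℝ)
    (hgm : ∀ j, Measurable (g j)) (hg0 : ∀ j t, 0 ≤ g j t)
    (hgb : ∀ j, ∃ B, ∀ t, g j t ≤ B)
    (hgpos : ∀ j, 0 < ∫ t : ℝ, g j t * gauss1 c t)
    (A : ℕ → Matrix (Fin n) (Fin n) ℝ) (hA : ∀ p, (A p).PosDef)
    (hAc : ∀ a b, Tendsto (fun p => A p a b) atTop
      (𝓝 ((c • (1 : Matrix (Fin n) (Fin n) ℝ)) a b))) :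
    Tendsto (fun p =>
        (∫ η : Fin n → ℝ, g i (η i) * (∏ j, g j (η j)) * gaussDensity (A p) η) /
        (∫ η : Fin n → ℝ, (∏ j, g j (η j)) * gaussDensity (A p) η))
      atTop (𝓝 ((∫ t : ℝ, (g i t) ^ 2 * gauss1 c t) / (∫ t : ℝ, g i t * gauss1 c t))) ∧
    (∀ᶠ p in atTop,
      0 < ∫ η : Fin n → ℝ, (∏ j, g j (η j)) * gaussDensity (A p) η) :=
  posterior_predictive_moment_limit_general n c hc i g hgm hg0 hgb hgpos A hAc
end

section
/- Fix n ≥ 1, c > 0, δ > (2c)^{-1}, and i ∈ {1,…,n}. Let gᵢ : ℝ → (0,∞) be measurable with ∫_ℝ gᵢ(t)^{-1} e^{−δt²} dt = ∞, and for j ≠ i let gⱼ : ℝ → [0,∞) be bounded measurable with ∫_ℝ gⱼ(t) e^{−δt²} dt > 0. Let (A_p)_{p≥1} be symmetric positive definite n×n real matrices with A_p → c I_n entrywise. For a symmetric positive definite n×n matrix A, let φ_A(η) = (2π)^{-n/2}(det A)^{-1/2} exp(−½ ηᵀA^{-1}η); integrals are with respect to Lebesgue measure. Then ∫_{ℝⁿ}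 gᵢ(ηᵢ)^{-1} ∏_{j≠i} gⱼ(ηⱼ) φ_{A_p}(η) dη → ∞ as p → ∞. -/
open MeasureTheory Matrix Filter Topology Finset
open scoped ENNReal

/-!
Since `A_p → c I`, eventually `det A_p > 0` and `A_p⁻¹` is so close to `c⁻¹ I` that
`ηᵀ A_p⁻¹ η ≤ 2δ ‖η‖²` (because `c⁻¹ < 2δ`). Then `φ_{A_p}(η) ≥ κ_p ∏ⱼ e^{-δ ηⱼ²}` with
`κ_p > 0`, so by Tonelli the integral dominates `κ_p ∏ⱼ ∫ wⱼ(t) e^{-δt²} dt`, where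
`wᵢ = gᵢ⁻¹` and `wⱼ = gⱼ` otherwise: one factor is infinite and none vanishes.
-/

theorem lintegral_fin_nat_prod_eq_prod {n : ℕ} {E : Type*} [MeasurableSpace E]
    {μ : Fin n → Measure E} [∀ i, SigmaFinite (μ i)]
    {f : Fin n → E → ℝ≥0∞} (hf : ∀ i, Measurable (f i)) :
    ∫⁻ x : Fin n → E, ∏ i, f i (x i) ∂(Measure.pi μ) = ∏ i, ∫⁻ x, f i x ∂(μ i) := by
  induction n with
  | zero => simp
  | succ n ih =>
      calc
        _ = ∫⁻ x : E × (Fin n → E),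
            f 0 x.1 * ∏ i : Fin n, f (Fin.succ i) (x.2 i)
            ∂((μ 0).prod (Measure.pi (fun i ↦ μ i.succ))) := by
          rw [← ((measurePreserving_piFinSuccAbove μ 0).symm).lintegral_comp_emb
            (MeasurableEquiv.measurableEmbedding _)]
          simp_rw [MeasurableEquiv.piFinSuccAbove_symm_apply, Fin.insertNthEquiv,
            Fin.prod_univ_succ, Fin.insertNth_zero, Equiv.coe_fn_mk, Fin.cons_succ,
            Fin.zero_succAbove, cast_eq, Fin.cons_zero]
        _ = (∫⁻ x, f 0 x ∂μ 0) * ∏ i : Fin n, ∫⁻ x, f i.succ x ∂(μ i.succ) := by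
          rw [← ih (fun i ↦ hf i.succ), ← lintegral_prod_mul (hf 0).aemeasurable
            (Measurable.aemeasurable (by fun_prop))]
        _ = ∏ i, ∫⁻ x, f i x ∂(μ i) := by rw [Fin.prod_univ_succ]

theorem lintegral_ofReal_ne_zero_of_integral_pos {α : Type*} [MeasurableSpace α]
    {μ : Measure α} {f : α → ℝ} (hf : 0 < ∫ x, f x ∂μ) :
    ∫⁻ x, ENNReal.ofReal (f x) ∂μ ≠ 0 := by
  have hint : Integrable f μ := by
    by_contra h
    rw [integral_undef h] at hf
    exact lt_irrefl _ hf
  intro h0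
  rw [integral_eq_lintegral_pos_part_sub_lintegral_neg_part hint, h0] at hf
  simp only [ENNReal.toReal_zero, zero_sub, Left.neg_pos_iff] at hf
  exact (ENNReal.toReal_nonneg).not_gt hf

theorem Filter.Tendsto.matrix_inv {α ι 𝕜 : Type*} [Fintype ι] [DecidableEq ι] [NormedField 𝕜]
    {l : Filter α} {M : α → Matrix ι ι 𝕜} {N : Matrix ι ι 𝕜} (hM : Tendsto M l (𝓝 N))
    (hN : N.det ≠ 0) : Tendsto (fun p ↦ (M p)⁻¹) l (𝓝 N⁻¹) :=
  (continuousAt_matrix_inv N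
    (by simpa [Ring.inverse_eq_inv'] using continuousAt_inv₀ hN)).tendsto.comp hM

section ScalarLimit

variable {α ι : Type*} [Fintype ι] [DecidableEq ι] {l : Filter α} {M : α → Matrix ι ι ℝ}
  {c : ℝ}

theorem eventually_det_pos_of_tendsto_smul_one (hc : 0 < c) (hM : Tendsto M l (𝓝 (c • 1))) :
    ∀ᶠ p in l, 0 < (M p).det := by
  refine ((continuous_id.matrix_det.tendsto _).comp hM).eventually_const_lt ?_
  simpa using pow_pos hc (Fintype.card ι)

theorem tendsto_inv_of_tendsto_smul_one (hc : c ≠ 0) (hM : Tendsto M l (𝓝 (c • 1))) :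
    Tendsto (fun p ↦ (M p)⁻¹) l (𝓝 (c⁻¹ • 1)) := by
  have hinv : (c • (1 : Matrix ι ι ℝ))⁻¹ = c⁻¹ • 1 := inv_eq_left_inv (by simp [hc])
  exact hinv ▸ hM.matrix_inv (by simp [hc])

end ScalarLimit

theorem abs_dotProduct_mulVec_le {ι : Type*} [Fintype ι] (M : Matrix ι ι ℝ) (x : ι → ℝ) :
    |x ⬝ᵥ M *ᵥ x| ≤ (∑ a, ∑ b, |M a b|) * ∑ j, x j ^ 2 := by
  have hsq : ∀ a, x a ^ 2 ≤ ∑ j, x j ^ 2 := fun a ↦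
    single_le_sum (f := fun j ↦ x j ^ 2) (fun j _ ↦ sq_nonneg _) (mem_univ a)
  calc |x ⬝ᵥ M *ᵥ x| = |∑ a, ∑ b, M a b * (x a * x b)| := by
        congr 1
        simp only [dotProduct, mulVec, mul_sum]
        exact sum_congr rfl fun a _ ↦ sum_congr rfl fun b _ ↦ by ring
    _ ≤ ∑ a, ∑ b, |M a b * (x a * x b)| :=
        (abs_sum_le_sum_abs _ _).trans (sum_le_sum fun a _ ↦ abs_sum_le_sum_abs _ _)
    _ ≤ ∑ a, ∑ b, |M a b| * ∑ j, x j ^ 2 := by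
        gcongr with a _ b _
        rw [abs_mul, abs_mul]
        gcongr
        nlinarith [hsq a, hsq b, sq_abs (x a), sq_abs (x b), abs_nonneg (x a),
          abs_nonneg (x b), sq_nonneg (|x a| - |x b|)]
    _ = (∑ a, ∑ b, |M a b|) * ∑ j, x j ^ 2 := by simp only [sum_mul]

theorem eventually_dotProduct_mulVec_le {α ι : Type*} [Fintype ι] [DecidableEq ι]
    {l : Filter α} {M : α → Matrix ι ι ℝ} {c r : ℝ} (hM : Tendsto M l (𝓝 (c • 1)))
    (hcr : c < r) : ∀ᶠ p in l, ∀ x : ι → ℝ, x ⬝ᵥ M p *ᵥ x ≤ r * ∑ j, x j ^ 2 := by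
  have hdev : Tendsto (fun p ↦ ∑ a, ∑ b, |(M p - c • 1) a b|) l (𝓝 0) := by
    have hcont : Continuous fun N : Matrix ι ι ℝ ↦ ∑ a, ∑ b, |(N - c • 1) a b| := by
      fun_prop
    simpa [Function.comp_def] using (hcont.tendsto (c • 1)).comp hM
  filter_upwards [hdev.eventually_lt_const (sub_pos.2 hcr)] with p hp x
  have hS : 0 ≤ ∑ j, x j ^ 2 := sum_nonneg fun j _ ↦ sq_nonneg _
  have hsplit : x ⬝ᵥ M p *ᵥ x = c * ∑ j, x j ^ 2 + x ⬝ᵥ (M p - c • 1) *ᵥ x := by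
    rw [sub_mulVec, smul_mulVec, one_mulVec, dotProduct_sub, dotProduct_smul, smul_eq_mul]
    simp only [dotProduct, sq]
    ring
  calc x ⬝ᵥ M p *ᵥ x ≤ c * ∑ j, x j ^ 2 + (∑ a, ∑ b, |(M p - c • 1) a b|) * ∑ j, x j ^ 2 := by
        rw [hsplit]
        gcongr
        exact (le_abs_self _).trans (abs_dotProduct_mulVec_le _ _)
    _ ≤ c * ∑ j, x j ^ 2 + (r - c) * ∑ j, x j ^ 2 := by gcongr
    _ = r * ∑ j, x j ^ 2 := by ring

theorem mul_exp_le_gaussDensity {m : ℕ} {A : Matrix (Fin m) (Fin m) ℝ} {δ : ℝ}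
    {η : Fin m → ℝ} (hη : η ⬝ᵥ A⁻¹ *ᵥ η ≤ 2 * δ * ∑ j, η j ^ 2) :
    (√((2 * Real.pi) ^ m * A.det))⁻¹ * Real.exp (-δ * ∑ j, η j ^ 2) ≤ gaussDensity A η := by
  unfold gaussDensity
  gcongr
  linarith

theorem lintegral_prod_mul_gaussDensity_eq_top {m : ℕ} {δ : ℝ} {w : Fin m → ℝ → ℝ}
    (hwm : ∀ j, Measurable (w j)) (hw0 : ∀ j t, 0 ≤ w j t) {i : Fin m}
    (hi : ∫⁻ t, ENNReal.ofReal (w i t * Real.exp (-δ * t ^ 2)) = ⊤)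
    (hne : ∀ j ≠ i, ∫⁻ t, ENNReal.ofReal (w j t * Real.exp (-δ * t ^ 2)) ≠ 0)
    {A : Matrix (Fin m) (Fin m) ℝ} (hdet : 0 < A.det)
    (hA : ∀ η, η ⬝ᵥ A⁻¹ *ᵥ η ≤ 2 * δ * ∑ j, η j ^ 2) :
    ∫⁻ η : Fin m → ℝ, ENNReal.ofReal ((∏ j, w j (η j)) * gaussDensity A η) = ⊤ := by
  set κ := (√((2 * Real.pi) ^ m * A.det))⁻¹
  have hκ : 0 < κ := by positivity
  set F : Fin m → ℝ → ℝ≥0∞ := fun j t ↦ ENNReal.ofReal (w j t * Real.exp (-δ * t ^ 2))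
  have hFm : ∀ j, Measurable (F j) := fun j ↦ by fun_prop
  have hprod : ∫⁻ η : Fin m → ℝ, ∏ j, F j (η j) = ⊤ := by
    rw [volume_pi, lintegral_fin_nat_prod_eq_prod hFm]
    refine WithTop.prod_eq_top (mem_univ i) hi fun j _ ↦ ?_
    by_cases hj : j = i
    · subst hj
      exact hi ▸ ENNReal.top_ne_zero
    · exact hne j hj
  have hle : ∀ η : Fin m → ℝ, ENNReal.ofReal κ * ∏ j, F j (η j) ≤
      ENNReal.ofReal ((∏ j, w j (η j)) * gaussDensity A η) := by
    intro η
    rw [← ENNReal.ofReal_prod_of_nonneg fun j _ ↦ mul_nonneg (hw0 j _) (Real.exp_nonneg _),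
      ← ENNReal.ofReal_mul hκ.le, prod_mul_distrib, ← Real.exp_sum, ← mul_sum]
    refine ENNReal.ofReal_le_ofReal ?_
    calc κ * ((∏ j, w j (η j)) * Real.exp (-δ * ∑ j, η j ^ 2))
        = (∏ j, w j (η j)) * (κ * Real.exp (-δ * ∑ j, η j ^ 2)) := by ring
      _ ≤ (∏ j, w j (η j)) * gaussDensity A η := by
        gcongr
        · exact prod_nonneg fun j _ ↦ hw0 j _
        · exact mul_exp_le_gaussDensity (hA η)
  refine eq_top_iff.2 ?_
  calc ⊤ = ENNReal.ofReal κ * ∫⁻ η : Fin m → ℝ, ∏ j, F j (η j) := by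
        rw [hprod, ENNReal.mul_top (by simpa using hκ)]
    _ = ∫⁻ η : Fin m → ℝ, ENNReal.ofReal κ * ∏ j, F j (η j) :=
        (lintegral_const_mul _ (by fun_prop)).symm
    _ ≤ _ := lintegral_mono hle

theorem posterior_variance_integral_diverges_general
    (n : ℕ) (c δ : ℝ) (hc : 0 < c) (hδ : (2 * c)⁻¹ < δ) (i : Fin n)
    (g : Fin n → ℝ → ℝ)
    (hgm : ∀ j, Measurable (g j)) (hg0 : ∀ j t, 0 ≤ g j t)
    (hgidiv : (∫⁻ t : ℝ, ENNReal.ofReal ((g i t)⁻¹ * Real.exp (-δ * t ^ 2))) = ⊤)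
    (hgpos : ∀ j, j ≠ i → 0 < ∫ t : ℝ, g j t * Real.exp (-δ * t ^ 2))
    (A : ℕ → Matrix (Fin n) (Fin n) ℝ)
    (hAc : ∀ a b, Tendsto (fun p => A p a b) atTop
      (𝓝 ((c • (1 : Matrix (Fin n) (Fin n) ℝ)) a b))) :
    Tendsto (fun p => ∫⁻ η : Fin n → ℝ,
        ENNReal.ofReal ((g i (η i))⁻¹ * (∏ j ∈ Finset.univ.erase i, g j (η j)) *
          gaussDensity (A p) η))
      atTop (𝓝 (⊤ : ℝ≥0∞)) := by
  classical
  set w : Fin n → ℝ → ℝ := fun j t ↦ if j = i then (g i t)⁻¹ else g j t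
  have hlim : Tendsto A atTop (𝓝 (c • 1)) :=
    tendsto_pi_nhds.2 fun a ↦ tendsto_pi_nhds.2 (hAc a)
  have hquad : ∀ᶠ p in atTop, ∀ η : Fin n → ℝ, η ⬝ᵥ (A p)⁻¹ *ᵥ η ≤ 2 * δ * ∑ j, η j ^ 2 := by
    have hcδ : c⁻¹ < 2 * δ := by rw [mul_inv] at hδ; linarith
    exact eventually_dotProduct_mulVec_le (tendsto_inv_of_tendsto_smul_one hc.ne' hlim) hcδ
  have hw : ∀ η : Fin n → ℝ,
      (g i (η i))⁻¹ * ∏ j ∈ univ.erase i, g j (η j) = ∏ j, w j (η j) := fun η ↦ by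
    rw [← mul_prod_erase univ _ (mem_univ i)]
    exact congrArg₂ _ (by simp [w]) (prod_congr rfl fun j hj ↦ by simp [w, ne_of_mem_erase hj])
  have hwm : ∀ j, Measurable (w j) := fun j ↦ by
    by_cases hj : j = i <;> simp [w, hj, hgm]
  have hw0 : ∀ j t, 0 ≤ w j t := fun j t ↦ by
    by_cases hj : j = i <;> simp [w, hj, hg0]
  have hwi : ∫⁻ t, ENNReal.ofReal (w i t * Real.exp (-δ * t ^ 2)) = ⊤ := by
    simpa [w] using hgidiv
  have hwj : ∀ j ≠ i, ∫⁻ t, ENNReal.ofReal (w j t * Real.exp (-δ * t ^ 2)) ≠ 0 := fun j hj ↦ by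
    simpa [w, hj] using lintegral_ofReal_ne_zero_of_integral_pos (hgpos j hj)
  refine tendsto_const_nhds.congr' ?_
  filter_upwards [eventually_det_pos_of_tendsto_smul_one hc hlim, hquad] with p hp hq
  simp_rw [hw]
  exact (lintegral_prod_mul_gaussDensity_eq_top hwm hw0 hwi hwj hp hq).symm

/-- **Divergence half of Theorem 4(b).** If `∫ gᵢ⁻¹ e^{−δt²} dt = ∞` for some
`δ > (2c)⁻¹` and `Aₚ → cIₙ` entrywise, then
`∫ gᵢ(ηᵢ)⁻¹ ∏_{j≠i} gⱼ(ηⱼ) φ_{Aₚ}(η) dη → ∞` as `p → ∞`. -/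
theorem posterior_variance_integral_diverges
    (n : ℕ) (hn : 1 ≤ n) (c δ : ℝ) (hc : 0 < c) (hδ : (2 * c)⁻¹ < δ) (i : Fin n)
    (g : Fin n → ℝ → ℝ)
    (hgm : ∀ j, Measurable (g j)) (hg0 : ∀ j t, 0 ≤ g j t)
    (hgi : ∀ t, 0 < g i t)
    (hgb : ∀ j, j ≠ i → ∃ B, ∀ t, g j t ≤ B)
    (hgidiv : (∫⁻ t : ℝ, ENNReal.ofReal ((g i t)⁻¹ * Real.exp (-δ * t ^ 2))) = ⊤)
    (hgpos : ∀ j, j ≠ i → 0 < ∫ t : ℝ, g j t * Real.exp (-δ * t ^ 2))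
    (A : ℕ → Matrix (Fin n) (Fin n) ℝ) (hA : ∀ p, (A p).PosDef)
    (hAc : ∀ a b, Tendsto (fun p => A p a b) atTop
      (𝓝 ((c • (1 : Matrix (Fin n) (Fin n) ℝ)) a b))) :
    Tendsto (fun p => ∫⁻ η : Fin n → ℝ,
        ENNReal.ofReal ((g i (η i))⁻¹ * (∏ j ∈ Finset.univ.erase i, g j (η j)) *
          gaussDensity (A p) η))
      atTop (𝓝 (⊤ : ℝ≥0∞)) :=
  posterior_variance_integral_diverges_general n c δ hc hδ i g hgm hg0 hgidiv hgpos A hAc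
end
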